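/- For every scoring matrix γ: edist_γ(s,t) = edist_γ(t,s) for all s,t ∈ Σ* if and only if the shortest-walk distance in D(γ) is symmetric, i.e., d_γ(a,b) = d_γ(b,a) for all a,b ∈ Σ₋ (including d_γ(a,‐) = d_γ(‐,a) for a ∈ Σ). -/

import Mathlib

open List

/-- A scoring matrix on alphabet `σ`; `none` represents the space symbol `‐`.
The value at `(none, none)` is irrelevant (never used on admissible columns). -/
abbrev Scoring (σ : Type*) := Option σ → Option σ → ℝ

/-- `A` is an alignment of the sequences `s` and `t`: a list of columns over
`Σ₋ × Σ₋` with no column `(‐,‐)`, whose first (resp. second) components with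
spaces removed spell `s` (resp. `t`). -/
def IsAlignment {σ : Type*} (A : List (Option σ × Option σ)) (s t : List σ) : Prop :=
  (∀ c ∈ A, c ≠ ((none : Option σ), (none : Option σ))) ∧
  A.filterMap Prod.fst = s ∧ A.filterMap Prod.snd = t

/-- The score of an alignment: the sum of `γ` over its columns. -/
def alignScore {σ : Type*} (γ : Scoring σ) (A : List (Option σ × Option σ)) : ℝ :=
  (A.map fun c => γ c.1 c.2).sum

/-- The weighted edit distance: minimum alignment score. -/
noncomputable def editDist {σ : Type*} (γ : Scoring σ) (s t : List σ) : ℝ :=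
  sInf {x | ∃ A, IsAlignment A s t ∧ alignScore γ A = x}

/-- The normalized edit distance: minimum normalized alignment score
(score divided by number of columns); for `s = t = ε` it is `0`. -/
noncomputable def ndist {σ : Type*} (γ : Scoring σ) (s t : List σ) : ℝ :=
  sInf {x | ∃ A, IsAlignment A s t ∧ alignScore γ A / (A.length : ℝ) = x}

/-- A walk in the digraph `D(γ)`: a list of vertices of `Σ₋` in which the
space `‐` never follows the space. -/
def IsWalkSeq {σ : Type*} (W : List (Option σ)) : Prop :=
  W.Chain' (fun a b => ¬(a = none ∧ b = none))

/-- The weight of a walk: the sum of the weights of its consecutive arcs. -/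
def walkWeight {σ : Type*} (γ : Scoring σ) (W : List (Option σ)) : ℝ :=
  ((W.zip W.tail).map fun p => γ p.1 p.2).sum

/-- `D(γ)` has a cycle of negative total weight (cycles start and end at a
vertex of `Σ`). -/
def HasNegCycle {σ : Type*} (γ : Scoring σ) : Prop :=
  ∃ (a : σ) (W : List (Option σ)),
    IsWalkSeq (some a :: (W ++ [some a])) ∧
    walkWeight γ (some a :: (W ++ [some a])) < 0

/-- The shortest-walk distance from `x` to `y` in `D(γ)`. -/
noncomputable def walkDist {σ : Type*} (γ : Scoring σ) (x y : Option σ) : ℝ :=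
  sInf {w | ∃ W : List (Option σ), IsWalkSeq W ∧ W.head? = some x ∧
    W.getLast? = some y ∧ walkWeight γ W = w}

/-- A column of an extended alignment: a nonempty sequence over `Σ₋`, with at
least one non-space symbol, no two consecutive spaces, and not having a space
at both ends. -/
def IsExtCol {σ : Type*} (c : List (Option σ)) : Prop :=
  c ≠ [] ∧ (∃ x ∈ c, x ≠ none) ∧
  c.Chain' (fun a b => ¬(a = none ∧ b = none)) ∧
  ¬(c.head? = some none ∧ c.getLast? = some none)

/-- An extended alignment of `s, t`: a list of admissible columns whose first
symbols (spaces removed) spell `s` and whose last symbols spell `t`. -/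
def IsExtAlignment {σ : Type*} (E : List (List (Option σ))) (s t : List σ) : Prop :=
  (∀ c ∈ E, IsExtCol c) ∧
  E.filterMap (fun c => c.head?.bind id) = s ∧
  E.filterMap (fun c => c.getLast?.bind id) = t

/-- The extended edit distance: minimum total score over extended alignments,
where the score of a column is the sum of `γ` over its consecutive pairs. -/
noncomputable def edist {σ : Type*} (γ : Scoring σ) (s t : List σ) : ℝ :=
  sInf {x | ∃ E, IsExtAlignment E s t ∧ (E.map (walkWeight γ)).sum = x}

/-- `f` is a premetric: `f x x = 0` and `f x y ≥ 0`. -/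
def IsPremetric {σ : Type*} (f : List σ → List σ → ℝ) : Prop :=
  (∀ s, f s s = 0) ∧ (∀ s t, 0 ≤ f s t)

/-!
A column of an extended alignment is exactly a walk in `D(γ)` that does not both start and end
at `‐`, and its score is the weight of that walk.

If `d_γ` is symmetric, every column from `x` to `y` can be replaced by a walk from `y` to `x`
that is heavier by at most `ε`, which turns an alignment of `s, t` into one of `t, s` of almost
the same score; so both sets of scores have the same infimum. This also covers the case where
weights are unbounded below, in which `sInf` returns `0` for all of them.

Conversely, an extended alignment of two strings of length at most one is a single walk, or two
walks through `‐` that glue to one walk, so `edist_γ(x, y) = d_γ(x, y)` for `x, y ∈ Σ₋` not both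
`‐`.
-/

namespace Real

theorem bddBelow_of_forall_exists_lt {S T : Set ℝ} (hT : BddBelow T)
    (h : ∀ x ∈ S, ∀ ε > 0, ∃ y ∈ T, y < x + ε) : BddBelow S := by
  obtain ⟨b, hb⟩ := hT
  refine ⟨b - 1, fun x hx => ?_⟩
  obtain ⟨y, hy, hlt⟩ := h x hx 1 one_pos
  linarith [hb hy]

theorem sInf_le_sInf_of_forall_exists_lt {S T : Set ℝ} (hS : S.Nonempty) (hT : BddBelow T)
    (h : ∀ x ∈ S, ∀ ε > 0, ∃ y ∈ T, y < x + ε) : sInf T ≤ sInf S :=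
  le_csInf hS fun x hx => le_of_forall_pos_le_add fun ε hε =>
    let ⟨_, hy, hlt⟩ := h x hx ε hε
    (csInf_le hT hy).trans hlt.le

theorem sInf_eq_sInf_of_forall_exists_lt {S T : Set ℝ} (hS : S.Nonempty) (hT : T.Nonempty)
    (hST : ∀ x ∈ S, ∀ ε > 0, ∃ y ∈ T, y < x + ε) (hTS : ∀ y ∈ T, ∀ ε > 0, ∃ x ∈ S, x < y + ε) :
    sInf S = sInf T := by
  by_cases hTb : BddBelow T
  · have hSb := bddBelow_of_forall_exists_lt hTb hST
    exact le_antisymm (sInf_le_sInf_of_forall_exists_lt hT hSb hTS)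
      (sInf_le_sInf_of_forall_exists_lt hS hTb hST)
  · have hSb : ¬BddBelow S := fun hSb => hTb (bddBelow_of_forall_exists_lt hSb hTS)
    rw [sInf_of_not_bddBelow hSb, sInf_of_not_bddBelow hTb]

end Real

section Alignment

variable {σ : Type*}

def walkWeights (γ : Scoring σ) (x y : Option σ) : Set ℝ :=
  {w | ∃ W : List (Option σ), IsWalkSeq W ∧ W.head? = some x ∧
    W.getLast? = some y ∧ walkWeight γ W = w}

def extAlignScores (γ : Scoring σ) (s t : List σ) : Set ℝ :=
  {x | ∃ E, IsExtAlignment E s t ∧ (E.map (walkWeight γ)).sum = x}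

theorem walkDist_eq_sInf (γ : Scoring σ) (x y : Option σ) :
    walkDist γ x y = sInf (walkWeights γ x y) := rfl

theorem edist_eq_sInf (γ : Scoring σ) (s t : List σ) :
    edist γ s t = sInf (extAlignScores γ s t) := rfl

@[simp] theorem walkWeight_singleton (γ : Scoring σ) (a : Option σ) : walkWeight γ [a] = 0 := by
  simp [walkWeight]

theorem walkWeight_cons_cons (γ : Scoring σ) (a b : Option σ) (W : List (Option σ)) :
    walkWeight γ (a :: b :: W) = γ a b + walkWeight γ (b :: W) := by
  simp [walkWeight]

theorem walkWeight_append_cons (γ : Scoring σ) (W₁ W₂ : List (Option σ)) (v : Option σ) :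
    walkWeight γ (W₁ ++ v :: W₂) = walkWeight γ (W₁ ++ [v]) + walkWeight γ (v :: W₂) := by
  induction W₁ with
  | nil => simp
  | cons a W₁ ih =>
    cases W₁ with
    | nil => simp [walkWeight_cons_cons]
    | cons b W₁ =>
      simp only [List.cons_append, walkWeight_cons_cons] at ih ⊢
      rw [ih]
      ring

theorem isWalkSeq_append_cons {W₁ W₂ : List (Option σ)} {v : Option σ}
    (h₁ : IsWalkSeq (W₁ ++ [v])) (h₂ : IsWalkSeq (v :: W₂)) : IsWalkSeq (W₁ ++ v :: W₂) := by
  have h := List.IsChain.append_overlap (l₂ := [v]) h₁ h₂ (List.cons_ne_nil v [])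
  rwa [List.append_assoc, List.singleton_append] at h

theorem walkWeights_add_mem {γ : Scoring σ} {x y z : Option σ} {w₁ w₂ : ℝ}
    (h₁ : w₁ ∈ walkWeights γ x y) (h₂ : w₂ ∈ walkWeights γ y z) :
    w₁ + w₂ ∈ walkWeights γ x z := by
  obtain ⟨W₁, hW₁, hx, hy, rfl⟩ := h₁
  obtain ⟨W₂, hW₂, hy', hz, rfl⟩ := h₂
  obtain ⟨W₁, rfl⟩ := List.getLast?_eq_some_iff.1 hy
  obtain ⟨W₂, rfl⟩ := List.head?_eq_some_iff.1 hy'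
  refine ⟨W₁ ++ y :: W₂, isWalkSeq_append_cons hW₁ hW₂, ?_, ?_, ?_⟩
  · cases W₁ <;> simpa using hx
  · simpa using hz
  · rw [walkWeight_append_cons]

theorem walkWeights_nonempty (γ : Scoring σ) (x y : Option σ) :
    (walkWeights γ x y).Nonempty := by
  rcases eq_or_ne x y with rfl | hxy
  · exact ⟨0, [x], List.isChain_singleton x, rfl, rfl, by simp⟩
  · exact ⟨γ x y, [x, y], List.isChain_pair.2 fun h => hxy (h.1.trans h.2.symm), rfl, rfl,
      by simp [walkWeight_cons_cons]⟩

theorem exists_walkWeights_lt_of_walkDist_eq {γ : Scoring σ} {x y : Option σ}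
    (hsym : walkDist γ x y = walkDist γ y x) {w ε : ℝ} (hw : w ∈ walkWeights γ x y)
    (hε : 0 < ε) : ∃ w' ∈ walkWeights γ y x, w' < w + ε := by
  by_cases hb : BddBelow (walkWeights γ x y)
  · refine exists_lt_of_csInf_lt (walkWeights_nonempty γ y x) ?_
    rw [← walkDist_eq_sInf, ← hsym]
    exact (csInf_le hb hw).trans_lt (lt_add_of_pos_right w hε)
  · -- walks `y → x → y → x` then have arbitrarily negative weight
    obtain ⟨v, hv⟩ := walkWeights_nonempty γ y x
    obtain ⟨u, hu, hlt⟩ := not_bddBelow_iff.1 hb (w + ε - 2 * v)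
    exact ⟨v + u + v, walkWeights_add_mem (walkWeights_add_mem hv hu) hv, by linarith⟩

theorem isExtCol_iff {c : List (Option σ)} :
    IsExtCol c ↔ IsWalkSeq c ∧ ∃ x y, c.head? = some x ∧ c.getLast? = some y ∧
      ¬(x = none ∧ y = none) := by
  constructor
  · rintro ⟨hne, -, hc, hends⟩
    have hx := List.head?_eq_some_head hne
    have hy := List.getLast?_eq_some_getLast hne
    exact ⟨hc, _, _, hx, hy, fun h => hends ⟨by rw [hx, h.1], by rw [hy, h.2]⟩⟩
  · rintro ⟨hc, x, y, hx, hy, hxy⟩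
    refine ⟨fun h => by simp [h] at hx, ?_, hc, fun h => hxy ?_⟩
    · by_cases hx' : x = none
      · exact ⟨y, List.mem_of_getLast? hy, fun hy' => hxy ⟨hx', hy'⟩⟩
      · exact ⟨x, List.mem_of_mem_head? hx, hx'⟩
    · rw [hx, hy] at h
      simpa using h

theorem IsExtCol.exists_reverse_lt {γ : Scoring σ}
    (hsym : ∀ x y, walkDist γ x y = walkDist γ y x) {c : List (Option σ)} (hc : IsExtCol c)
    {ε : ℝ} (hε : 0 < ε) :
    ∃ c', IsExtCol c' ∧ c'.head? = c.getLast? ∧ c'.getLast? = c.head? ∧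
      walkWeight γ c' < walkWeight γ c + ε := by
  obtain ⟨hcw, x, y, hx, hy, hxy⟩ := isExtCol_iff.1 hc
  obtain ⟨_, ⟨c', hcw', hy', hx', rfl⟩, hlt⟩ :=
    exists_walkWeights_lt_of_walkDist_eq (hsym x y) ⟨c, hcw, hx, hy, rfl⟩ hε
  exact ⟨c', isExtCol_iff.2 ⟨hcw', y, x, hy', hx', fun h => hxy h.symm⟩,
    hy'.trans hy.symm, hx'.trans hx.symm, hlt⟩

theorem exists_reverse_extCols_lt {γ : Scoring σ} (hsym : ∀ x y, walkDist γ x y = walkDist γ y x) :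
    ∀ {E : List (List (Option σ))}, (∀ c ∈ E, IsExtCol c) → ∀ {ε : ℝ}, 0 < ε →
    ∃ E' : List (List (Option σ)), (∀ c ∈ E', IsExtCol c) ∧
      E'.map head? = E.map getLast? ∧ E'.map getLast? = E.map head? ∧
      (E'.map (walkWeight γ)).sum < (E.map (walkWeight γ)).sum + ε
  | [], _, _, hε => ⟨[], by simp, rfl, rfl, by simpa using hε⟩
  | c :: E, hcol, ε, hε => by
    obtain ⟨c', hc', hh, hl, hlt⟩ :=
      IsExtCol.exists_reverse_lt hsym (hcol c mem_cons_self) (half_pos hε)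
    obtain ⟨E', hE', hhs, hls, hlts⟩ :=
      exists_reverse_extCols_lt hsym (fun c hc => hcol c (mem_cons_of_mem _ hc)) (half_pos hε)
    refine ⟨c' :: E', ?_, by simp [hh, hhs], by simp [hl, hls], ?_⟩
    · simpa [hc'] using hE'
    · simp only [map_cons, sum_cons]
      linarith

theorem IsExtAlignment.exists_reverse_lt {γ : Scoring σ}
    (hsym : ∀ x y, walkDist γ x y = walkDist γ y x) {E : List (List (Option σ))}
    {s t : List σ} (hE : IsExtAlignment E s t) {ε : ℝ} (hε : 0 < ε) :
    ∃ E', IsExtAlignment E' t s ∧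
      (E'.map (walkWeight γ)).sum < (E.map (walkWeight γ)).sum + ε := by
  obtain ⟨hcol, rfl, rfl⟩ := hE
  obtain ⟨E', hcol', hh, hl, hlt⟩ := exists_reverse_extCols_lt hsym hcol hε
  refine ⟨E', ⟨hcol', ?_, ?_⟩, hlt⟩
  · simpa [filterMap_map, Function.comp_def] using congrArg (filterMap (·.bind id)) hh
  · simpa [filterMap_map, Function.comp_def] using congrArg (filterMap (·.bind id)) hl

theorem extAlignScores_nonempty (γ : Scoring σ) (s t : List σ) :
    (extAlignScores γ s t).Nonempty := by
  refine ⟨_, (s.map fun a => [some a, none]) ++ t.map fun b => [none, some b], ⟨?_, ?_, ?_⟩, rfl⟩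
  · intro c hc
    simp only [mem_append, mem_map] at hc
    rcases hc with ⟨a, -, rfl⟩ | ⟨b, -, rfl⟩ <;>
      exact isExtCol_iff.2 ⟨List.isChain_pair.2 (by simp), _, _, rfl, rfl, by simp⟩
  · simp [filterMap_append, filterMap_map, Function.comp_def]
  · simp [filterMap_append, filterMap_map]

theorem edist_comm_of_walkDist_comm {γ : Scoring σ}
    (hsym : ∀ x y, walkDist γ x y = walkDist γ y x) (s t : List σ) :
    edist γ s t = edist γ t s := by
  have hrev : ∀ s t, ∀ w ∈ extAlignScores γ s t, ∀ ε > 0,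
      ∃ w' ∈ extAlignScores γ t s, w' < w + ε := by
    rintro s t _ ⟨E, hE, rfl⟩ ε hε
    obtain ⟨E', hE', hlt⟩ := hE.exists_reverse_lt hsym hε
    exact ⟨_, ⟨E', hE', rfl⟩, hlt⟩
  exact Real.sInf_eq_sInf_of_forall_exists_lt (extAlignScores_nonempty γ s t)
    (extAlignScores_nonempty γ t s) (hrev s t) (hrev t s)

theorem IsExtAlignment.length_le {E : List (List (Option σ))} {s t : List σ}
    (hE : IsExtAlignment E s t) : E.length ≤ s.length + t.length := by
  obtain ⟨hcol, rfl, rfl⟩ := hE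
  rw [length_filterMap_eq_countP, length_filterMap_eq_countP,
    length_eq_countP_add_countP fun c => (c.head?.bind id).isSome]
  refine Nat.add_le_add_left (countP_mono_left fun c hc hnone => ?_) _
  obtain ⟨-, x, y, hx, hy, hxy⟩ := isExtCol_iff.1 (hcol c hc)
  rw [hx] at hnone
  rw [hy]
  rcases x with _ | a <;> rcases y with _ | b <;> simp_all

theorem isExtAlignment_singleton {W : List (Option σ)} {x y : Option σ} (hW : IsWalkSeq W)
    (hx : W.head? = some x) (hy : W.getLast? = some y) (hxy : ¬(x = none ∧ y = none)) :
    IsExtAlignment [W] x.toList y.toList := by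
  refine ⟨by simpa using isExtCol_iff.2 ⟨hW, x, y, hx, hy, hxy⟩, ?_, ?_⟩
  · simp only [filterMap_cons, filterMap_nil, hx]
    cases x <;> rfl
  · simp only [filterMap_cons, filterMap_nil, hy]
    cases y <;> rfl

theorem IsExtAlignment.sum_mem_walkWeights {γ : Scoring σ} {E : List (List (Option σ))}
    {x y : Option σ} (hxy : ¬(x = none ∧ y = none)) (hE : IsExtAlignment E x.toList y.toList) :
    (E.map (walkWeight γ)).sum ∈ walkWeights γ x y := by
  have hlen := hE.length_le
  obtain ⟨hcol, hs, ht⟩ := hE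
  match E, hlen with
  | [], _ => rcases x with _ | a <;> rcases y with _ | b <;> simp_all
  | [c], _ =>
    obtain ⟨hw, h, l, hh, hl, -⟩ := isExtCol_iff.1 (hcol c (by simp))
    simp only [filterMap_cons, filterMap_nil, hh, hl, Option.bind_some, id_eq] at hs ht
    obtain rfl : h = x := by
      cases h <;> cases x <;> simp at hs ⊢
      exact hs
    obtain rfl : l = y := by
      cases l <;> cases y <;> simp at ht ⊢
      exact ht
    simpa using ⟨c, hw, hh, hl, rfl⟩
  | [c₁, c₂], _ =>
    -- one column runs from a letter of `x` to `‐`, the other from `‐` to a letter of `y`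
    obtain ⟨hw₁, h₁, l₁, hh₁, hl₁, hn₁⟩ := isExtCol_iff.1 (hcol c₁ (by simp))
    obtain ⟨hw₂, h₂, l₂, hh₂, hl₂, hn₂⟩ := isExtCol_iff.1 (hcol c₂ (by simp))
    have m₁ : walkWeight γ c₁ ∈ walkWeights γ h₁ l₁ := ⟨c₁, hw₁, hh₁, hl₁, rfl⟩
    have m₂ : walkWeight γ c₂ ∈ walkWeights γ h₂ l₂ := ⟨c₂, hw₂, hh₂, hl₂, rfl⟩
    simp only [filterMap_cons, filterMap_nil, hh₁, hh₂, hl₁, hl₂, Option.bind_some, id_eq] at hs ht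
    simp only [map_cons, map_nil, sum_cons, sum_nil, add_zero]
    rcases h₁ with _ | a₁ <;> rcases h₂ with _ | a₂ <;> rcases l₁ with _ | b₁ <;>
      rcases l₂ with _ | b₂ <;> rcases x with _ | a <;> rcases y with _ | b <;>
      simp at hs ht hn₁ hn₂ ⊢ <;> subst hs ht
    · rw [add_comm]
      exact walkWeights_add_mem m₂ m₁
    · exact walkWeights_add_mem m₁ m₂
  | _ :: _ :: _ :: _, hlen => rcases x with _ | a <;> rcases y with _ | b <;> simp at hlen

theorem extAlignScores_toList (γ : Scoring σ) {x y : Option σ} (hxy : ¬(x = none ∧ y = none)) :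
    extAlignScores γ x.toList y.toList = walkWeights γ x y := by
  ext w
  constructor
  · rintro ⟨E, hE, rfl⟩
    exact hE.sum_mem_walkWeights hxy
  · rintro ⟨W, hW, hx, hy, rfl⟩
    exact ⟨[W], isExtAlignment_singleton hW hx hy hxy, by simp⟩

theorem edist_toList (γ : Scoring σ) {x y : Option σ} (hxy : ¬(x = none ∧ y = none)) :
    edist γ x.toList y.toList = walkDist γ x y := by
  rw [edist_eq_sInf, walkDist_eq_sInf, extAlignScores_toList γ hxy]

end Alignment

theorem stmt18_general {σ : Type*} (γ : Scoring σ) :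
    (∀ s t : List σ, edist γ s t = edist γ t s) ↔
      (∀ a b : Option σ, walkDist γ a b = walkDist γ b a) := by
  refine ⟨fun h x y => ?_, edist_comm_of_walkDist_comm⟩
  by_cases hxy : x = none ∧ y = none
  · rw [hxy.1, hxy.2]
  · rw [← edist_toList γ hxy, ← edist_toList γ (hxy ∘ And.symm), h]

theorem stmt18 {σ : Type*} [Fintype σ] (γ : Scoring σ) :
    (∀ s t : List σ, edist γ s t = edist γ t s) ↔
      (∀ a b : Option σ, walkDist γ a b = walkDist γ b a) :=
  stmt18_general γ
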